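/- Weight ratio of the two-task EMGD solution: let g₁, g₂ be vectors in a real inner product space and σ₁, σ₂ > 0 with σ₂ g₁ ≠ σ₁ g₂. If σ₁⟨g₂, g₂⟩ > σ₂⟨g₁, g₂⟩ and σ₂⟨g₁, g₁⟩ > σ₁⟨g₁, g₂⟩, then the minimizer (λ₁*, λ₂*) of the two-task EMGD problem has λ₁* > 0, λ₂* > 0 and satisfies λ₁*/λ₂* = (σ₁⟨g₂, g₂⟩ − σ₂⟨g₁, g₂⟩)/(σ₂⟨g₁, g₁⟩ − σ₁⟨g₁, g₂⟩). -/

import Mathlib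

/-!
Write `v := σ₂ • g₁ - σ₁ • g₂`. Moving along the feasible line changes `λ₁ • g₁ + λ₂ • g₂`
by multiples of `v`, and `⟪λ₁ • g₁ + λ₂ • g₂, v⟫ = λ₁ B - λ₂ A` with
`A = σ₁⟪g₂, g₂⟫ - σ₂⟪g₁, g₂⟫`, `B = σ₂⟪g₁, g₁⟫ - σ₁⟪g₁, g₂⟫`. Since `σ₁ A + σ₂ B = ‖v‖² > 0`,
the point `(A, B) / ‖v‖²` is feasible, nonnegative, and its combination is orthogonal to `v`;
by Pythagoras it is the unique minimizer over the whole feasible line.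
-/

open RealInnerProductSpace

section

variable {E : Type*} [NormedAddCommGroup E] [InnerProductSpace ℝ E]

theorem eq_zero_of_norm_add_smul_sq_le {w v : E} (hv : v ≠ 0) (hwv : ⟪w, v⟫ = 0) {s : ℝ}
    (h : ‖w + s • v‖ ^ 2 ≤ ‖w‖ ^ 2) : s = 0 := by
  rw [norm_add_sq_real, inner_smul_right, hwv, norm_smul, Real.norm_eq_abs, mul_pow,
    sq_abs] at h
  have h0 : s ^ 2 * ‖v‖ ^ 2 ≤ 0 := by linarith
  have hs2 : s ^ 2 ≤ 0 := nonpos_of_mul_nonpos_left h0 (by positivity)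
  exact pow_eq_zero_iff two_ne_zero |>.mp (le_antisymm hs2 (sq_nonneg s))

variable (g₁ g₂ : E) (σ₁ σ₂ : ℝ)

theorem inner_add_smul_sub_smul (a₁ a₂ : ℝ) :
    ⟪a₁ • g₁ + a₂ • g₂, σ₂ • g₁ - σ₁ • g₂⟫ =
      a₁ * (σ₂ * ⟪g₁, g₁⟫ - σ₁ * ⟪g₁, g₂⟫) - a₂ * (σ₁ * ⟪g₂, g₂⟫ - σ₂ * ⟪g₁, g₂⟫) := by
  simp only [inner_add_left, inner_sub_right, real_inner_smul_left, real_inner_smul_right,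
    real_inner_comm g₁ g₂]
  ring

theorem norm_smul_sub_smul_sq :
    ‖σ₂ • g₁ - σ₁ • g₂‖ ^ 2 =
      σ₁ * (σ₁ * ⟪g₂, g₂⟫ - σ₂ * ⟪g₁, g₂⟫) + σ₂ * (σ₂ * ⟪g₁, g₁⟫ - σ₁ * ⟪g₁, g₂⟫) := by
  have h := inner_add_smul_sub_smul g₁ g₂ σ₁ σ₂ σ₂ (-σ₁)
  rw [neg_smul, ← sub_eq_add_neg] at h
  rw [← real_inner_self_eq_norm_sq, h]
  ring

variable {g₁ g₂ σ₁ σ₂}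

theorem add_smul_eq_add_smul_sub_smul (hσ₂ : σ₂ ≠ 0) {a₁ a₂ b₁ b₂ : ℝ}
    (hab : a₁ * σ₁ + a₂ * σ₂ = b₁ * σ₁ + b₂ * σ₂) :
    a₁ • g₁ + a₂ • g₂ = b₁ • g₁ + b₂ • g₂ + ((a₁ - b₁) / σ₂) • (σ₂ • g₁ - σ₁ • g₂) := by
  match_scalars
  · field_simp
    ring
  · field_simp
    linear_combination hab

theorem eq_of_norm_sq_le_of_inner_eq_zero (hσ₂ : σ₂ ≠ 0) (hne : σ₂ • g₁ ≠ σ₁ • g₂)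
    {a₁ a₂ b₁ b₂ : ℝ} (hab : a₁ * σ₁ + a₂ * σ₂ = b₁ * σ₁ + b₂ * σ₂)
    (horth : ⟪b₁ • g₁ + b₂ • g₂, σ₂ • g₁ - σ₁ • g₂⟫ = 0)
    (hle : ‖a₁ • g₁ + a₂ • g₂‖ ^ 2 ≤ ‖b₁ • g₁ + b₂ • g₂‖ ^ 2) :
    a₁ = b₁ ∧ a₂ = b₂ := by
  rw [add_smul_eq_add_smul_sub_smul hσ₂ hab] at hle
  have hs := eq_zero_of_norm_add_smul_sq_le (sub_ne_zero.mpr hne) horth hle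
  rw [div_eq_zero_iff, sub_eq_zero] at hs
  have ha₁ : a₁ = b₁ := hs.resolve_right hσ₂
  subst ha₁
  exact ⟨rfl, mul_right_cancel₀ hσ₂ (by linarith)⟩

end

theorem stmt_14_general {H : Type*} [NormedAddCommGroup H] [InnerProductSpace ℝ H]
    (g₁ g₂ : H) (σ₁ σ₂ : ℝ) (hσ₂ : 0 < σ₂)
    (hne : σ₂ • g₁ ≠ σ₁ • g₂)
    (h₁ : σ₂ * ⟪g₁, g₂⟫ < σ₁ * ⟪g₂, g₂⟫)
    (h₂ : σ₁ * ⟪g₁, g₂⟫ < σ₂ * ⟪g₁, g₁⟫)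
    (lam₁star lam₂star : ℝ)
    (hfeas : lam₁star * σ₁ + lam₂star * σ₂ = 1)
    (hmin : ∀ lam₁ lam₂ : ℝ, 0 ≤ lam₁ → 0 ≤ lam₂ → lam₁ * σ₁ + lam₂ * σ₂ = 1 →
      ‖lam₁star • g₁ + lam₂star • g₂‖ ^ 2 ≤ ‖lam₁ • g₁ + lam₂ • g₂‖ ^ 2) :
    0 < lam₁star ∧ 0 < lam₂star ∧
    lam₁star / lam₂star =
      (σ₁ * ⟪g₂, g₂⟫ - σ₂ * ⟪g₁, g₂⟫) / (σ₂ * ⟪g₁, g₁⟫ - σ₁ * ⟪g₁, g₂⟫) := by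
  set A := σ₁ * ⟪g₂, g₂⟫ - σ₂ * ⟪g₁, g₂⟫
  set B := σ₂ * ⟪g₁, g₁⟫ - σ₁ * ⟪g₁, g₂⟫
  have hA : 0 < A := sub_pos.mpr h₁
  have hB : 0 < B := sub_pos.mpr h₂
  have hD : 0 < σ₁ * A + σ₂ * B := by
    rw [← norm_smul_sub_smul_sq]
    exact pow_pos (norm_pos_iff.mpr (sub_ne_zero.mpr hne)) 2
  set D := σ₁ * A + σ₂ * B
  have hμ : A / D * σ₁ + B / D * σ₂ = 1 := by
    field_simp
    ring
  have horth : ⟪(A / D) • g₁ + (B / D) • g₂, σ₂ • g₁ - σ₁ • g₂⟫ = 0 := by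
    rw [inner_add_smul_sub_smul]
    ring
  obtain ⟨rfl, rfl⟩ := eq_of_norm_sq_le_of_inner_eq_zero hσ₂.ne' hne (hfeas.trans hμ.symm)
    horth (hmin _ _ (div_pos hA hD).le (div_pos hB hD).le hμ)
  exact ⟨div_pos hA hD, div_pos hB hD, div_div_div_cancel_right₀ hD.ne' A B⟩

/-- weight ratio of the two-task EMGD solution: if `σ₂ • g₁ ≠ σ₁ • g₂`,
`σ₁⟪g₂, g₂⟫ > σ₂⟪g₁, g₂⟫` and `σ₂⟪g₁, g₁⟫ > σ₁⟪g₁, g₂⟫`, then any minimizer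
`(λ₁*, λ₂*)` of the two-task EMGD problem has `λ₁* > 0`, `λ₂* > 0` and
`λ₁*/λ₂* = (σ₁⟪g₂, g₂⟫ - σ₂⟪g₁, g₂⟫)/(σ₂⟪g₁, g₁⟫ - σ₁⟪g₁, g₂⟫)`. -/
theorem stmt_14 {H : Type*} [NormedAddCommGroup H] [InnerProductSpace ℝ H]
    (g₁ g₂ : H) (σ₁ σ₂ : ℝ) (hσ₁ : 0 < σ₁) (hσ₂ : 0 < σ₂)
    (hne : σ₂ • g₁ ≠ σ₁ • g₂)
    (h₁ : σ₂ * ⟪g₁, g₂⟫ < σ₁ * ⟪g₂, g₂⟫)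
    (h₂ : σ₁ * ⟪g₁, g₂⟫ < σ₂ * ⟪g₁, g₁⟫)
    (lam₁star lam₂star : ℝ)
    (hnn₁ : 0 ≤ lam₁star) (hnn₂ : 0 ≤ lam₂star)
    (hfeas : lam₁star * σ₁ + lam₂star * σ₂ = 1)
    (hmin : ∀ lam₁ lam₂ : ℝ, 0 ≤ lam₁ → 0 ≤ lam₂ → lam₁ * σ₁ + lam₂ * σ₂ = 1 →
      ‖lam₁star • g₁ + lam₂star • g₂‖ ^ 2 ≤ ‖lam₁ • g₁ + lam₂ • g₂‖ ^ 2) :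
    0 < lam₁star ∧ 0 < lam₂star ∧
    lam₁star / lam₂star =
      (σ₁ * ⟪g₂, g₂⟫ - σ₂ * ⟪g₁, g₂⟫) / (σ₂ * ⟪g₁, g₁⟫ - σ₁ * ⟪g₁, g₂⟫) :=
  stmt_14_general g₁ g₂ σ₁ σ₂ hσ₂ hne h₁ h₂ lam₁star lam₂star hfeas hmin
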